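/- arXiv:2510.25609 — 4 statements merged into one kernel-verified Lean document; each statement's English description precedes it below -/
import Mathlib

section
/- Let X be a measurable space, let P₁ and P₂ be probability measures on X with densities p₁ and p₂ with respect to a σ-finite measure μ, and let q₁, q₂ ∈ (0,1) with q₁ + q₂ = 1. Define h⋆ : X → [-1, 0] by h⋆(x) = -1 if q₁ p₁(x) < q₂ p₂(x) and h⋆(x) = 0 otherwise. Then h⋆ maximizes ∫ (q₁ p₁(x) - q₂ p₂(x)) h(x) dμ(x) over all measurable h : X → [-1, 0], and q₂ - (q₁ ∫ h⋆ dP₁ - q₂ ∫ h⋆ dP₂) = 1 - ∫ max{q₁ p₁(x), q₂ p₂(x)} dμ(x), i.e. the BOLT bound evaluated at h⋆ equals the Bayes error. -/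
open MeasureTheory

/-- **Optimal bounding function and tightness of the BOLT bound.**
With priors `q₁, q₂ ∈ (0,1)`, `q₁ + q₂ = 1`, and class-conditional measures `P₁, P₂`
with densities `p₁, p₂` w.r.t. a σ-finite `μ`, the function
`h⋆(x) = -1` if `q₁ p₁(x) < q₂ p₂(x)` and `0` otherwise maximizes
`∫ (q₁ p₁ - q₂ p₂) h dμ` over measurable `h : X → [-1,0]`, and the BOLT bound at `h⋆`
equals the Bayes error: `q₂ - (q₁ ∫ h⋆ dP₁ - q₂ ∫ h⋆ dP₂) = 1 - ∫ max{q₁p₁, q₂p₂} dμ`. -/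
theorem bolt_optimal_h_and_tightness
    {X : Type*} [MeasurableSpace X]
    (μ : Measure X) [SigmaFinite μ]
    (P₁ P₂ : Measure X) [IsProbabilityMeasure P₁] [IsProbabilityMeasure P₂]
    (p₁ p₂ : X → ℝ) (hp₁m : Measurable p₁) (hp₂m : Measurable p₂)
    (hp₁0 : ∀ x, 0 ≤ p₁ x) (hp₂0 : ∀ x, 0 ≤ p₂ x)
    (hP₁ : P₁ = μ.withDensity (fun x => ENNReal.ofReal (p₁ x)))
    (hP₂ : P₂ = μ.withDensity (fun x => ENNReal.ofReal (p₂ x)))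
    (q₁ q₂ : ℝ) (hq₁ : q₁ ∈ Set.Ioo (0:ℝ) 1) (hq₂ : q₂ ∈ Set.Ioo (0:ℝ) 1)
    (hq : q₁ + q₂ = 1)
    (hstar : X → ℝ)
    (hhstar : hstar = fun x => if q₁ * p₁ x < q₂ * p₂ x then (-1:ℝ) else 0) :
    (∀ h : X → ℝ, Measurable h → (∀ x, h x ∈ Set.Icc (-1:ℝ) 0) →
        ∫ x, (q₁ * p₁ x - q₂ * p₂ x) * h x ∂μ ≤
          ∫ x, (q₁ * p₁ x - q₂ * p₂ x) * hstar x ∂μ) ∧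
      q₂ - (q₁ * ∫ x, hstar x ∂P₁ - q₂ * ∫ x, hstar x ∂P₂) =
        1 - ∫ x, max (q₁ * p₁ x) (q₂ * p₂ x) ∂μ := by
  obtain ⟨hq₁0, hq₁1⟩ := hq₁
  obtain ⟨hq₂0, hq₂1⟩ := hq₂
  -- integrability and integrals of densities
  have hlint₁ : ∫⁻ x, ENNReal.ofReal (p₁ x) ∂μ = 1 := by
    have h1 : (μ.withDensity fun x => ENNReal.ofReal (p₁ x)) Set.univ = 1 := by
      rw [← hP₁]; exact measure_univ
    rwa [withDensity_apply _ MeasurableSet.univ, setLIntegral_univ] at h1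
  have hlint₂ : ∫⁻ x, ENNReal.ofReal (p₂ x) ∂μ = 1 := by
    have h1 : (μ.withDensity fun x => ENNReal.ofReal (p₂ x)) Set.univ = 1 := by
      rw [← hP₂]; exact measure_univ
    rwa [withDensity_apply _ MeasurableSet.univ, setLIntegral_univ] at h1
  have hint₁ : Integrable p₁ μ := by
    refine ⟨hp₁m.aestronglyMeasurable, ?_⟩
    rw [hasFiniteIntegral_iff_ofReal (Filter.Eventually.of_forall hp₁0), hlint₁]
    exact ENNReal.one_lt_top
  have hint₂ : Integrable p₂ μ := by
    refine ⟨hp₂m.aestronglyMeasurable, ?_⟩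
    rw [hasFiniteIntegral_iff_ofReal (Filter.Eventually.of_forall hp₂0), hlint₂]
    exact ENNReal.one_lt_top
  have hInt₁ : ∫ x, p₁ x ∂μ = 1 := by
    rw [integral_eq_lintegral_of_nonneg_ae (Filter.Eventually.of_forall hp₁0)
      hp₁m.aestronglyMeasurable, hlint₁]; simp
  -- the dominating function
  have hdom : Integrable (fun x => q₁ * p₁ x + q₂ * p₂ x) μ :=
    (hint₁.const_mul q₁).add (hint₂.const_mul q₂)
  have hdom0 : ∀ x, 0 ≤ q₁ * p₁ x + q₂ * p₂ x := fun x => by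
    have := hp₁0 x; have := hp₂0 x; positivity
  have hsm : Measurable hstar := by
    rw [hhstar]
    exact Measurable.ite (measurableSet_lt (hp₁m.const_mul q₁) (hp₂m.const_mul q₂))
      measurable_const measurable_const
  have hsbd : ∀ x, hstar x ∈ Set.Icc (-1:ℝ) 0 := by
    intro x; rw [hhstar]; dsimp only; split <;> norm_num
  -- generic integrability of (q₁p₁ - q₂p₂) * h for bounded h
  have key : ∀ h : X → ℝ, Measurable h → (∀ x, h x ∈ Set.Icc (-1:ℝ) 0) →
      Integrable (fun x => (q₁ * p₁ x - q₂ * p₂ x) * h x) μ := by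
    intro h hm hb
    refine hdom.mono (((hp₁m.const_mul q₁).sub (hp₂m.const_mul q₂)).mul hm).aestronglyMeasurable
      (Filter.Eventually.of_forall fun x => ?_)
    have h1 := (hb x).1; have h2 := (hb x).2
    have habs : |h x| ≤ 1 := abs_le.2 ⟨h1, le_trans h2 zero_le_one⟩
    have : |(q₁ * p₁ x - q₂ * p₂ x) * h x| ≤ |q₁ * p₁ x - q₂ * p₂ x| * 1 := by
      rw [abs_mul]; exact mul_le_mul_of_nonneg_left habs (abs_nonneg _)
    rw [Real.norm_eq_abs, Real.norm_eq_abs]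
    calc |(q₁ * p₁ x - q₂ * p₂ x) * h x| ≤ |q₁ * p₁ x - q₂ * p₂ x| * 1 := this
      _ ≤ |q₁ * p₁ x + q₂ * p₂ x| := by
          rw [mul_one, abs_of_nonneg (hdom0 x)]
          have := hp₁0 x; have := hp₂0 x
          have h1 : q₁ * p₁ x - q₂ * p₂ x ≤ q₁ * p₁ x + q₂ * p₂ x := by nlinarith
          have h2 : -(q₁ * p₁ x + q₂ * p₂ x) ≤ q₁ * p₁ x - q₂ * p₂ x := by nlinarith
          exact abs_le.2 ⟨h2, h1⟩
  have hstarInt := key hstar hsm hsbd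
  constructor
  · intro h hm hb
    refine integral_mono (key h hm hb) hstarInt fun x => ?_
    have h1 := (hb x).1; have h2 := (hb x).2
    rw [hhstar]; dsimp only
    by_cases hc : q₁ * p₁ x < q₂ * p₂ x
    · rw [if_pos hc]
      have hfneg : q₁ * p₁ x - q₂ * p₂ x ≤ 0 := by linarith
      nlinarith
    · rw [if_neg hc]
      push_neg at hc
      have : 0 ≤ q₁ * p₁ x - q₂ * p₂ x := by linarith
      nlinarith
  · -- tightness
    have e₁ : ∫ x, hstar x ∂P₁ = ∫ x, p₁ x * hstar x ∂μ := by
      rw [hP₁]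
      have : (fun x => ENNReal.ofReal (p₁ x)) = fun x => ((p₁ x).toNNReal : ENNReal) := rfl
      rw [this, integral_withDensity_eq_integral_smul (hp₁m.real_toNNReal) hstar]
      refine integral_congr_ae (Filter.Eventually.of_forall fun x => ?_)
      simp [NNReal.smul_def, Real.coe_toNNReal _ (hp₁0 x)]
    have e₂ : ∫ x, hstar x ∂P₂ = ∫ x, p₂ x * hstar x ∂μ := by
      rw [hP₂]
      have : (fun x => ENNReal.ofReal (p₂ x)) = fun x => ((p₂ x).toNNReal : ENNReal) := rfl
      rw [this, integral_withDensity_eq_integral_smul (hp₂m.real_toNNReal) hstar]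
      refine integral_congr_ae (Filter.Eventually.of_forall fun x => ?_)
      simp [NNReal.smul_def, Real.coe_toNNReal _ (hp₂0 x)]
    have hintp₁h : Integrable (fun x => p₁ x * hstar x) μ := by
      refine hint₁.mono (hp₁m.mul hsm).aestronglyMeasurable
        (Filter.Eventually.of_forall fun x => ?_)
      have h1 := (hsbd x).1; have h2 := (hsbd x).2
      rw [Real.norm_eq_abs, Real.norm_eq_abs, abs_mul, abs_of_nonneg (hp₁0 x)]
      have : |hstar x| ≤ 1 := abs_le.2 ⟨h1, le_trans h2 zero_le_one⟩
      nlinarith [abs_nonneg (hstar x), hp₁0 x]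
    have hintp₂h : Integrable (fun x => p₂ x * hstar x) μ := by
      refine hint₂.mono (hp₂m.mul hsm).aestronglyMeasurable
        (Filter.Eventually.of_forall fun x => ?_)
      have h1 := (hsbd x).1; have h2 := (hsbd x).2
      rw [Real.norm_eq_abs, Real.norm_eq_abs, abs_mul, abs_of_nonneg (hp₂0 x)]
      have : |hstar x| ≤ 1 := abs_le.2 ⟨h1, le_trans h2 zero_le_one⟩
      nlinarith [abs_nonneg (hstar x), hp₂0 x]
    have ecomb : q₁ * ∫ x, hstar x ∂P₁ - q₂ * ∫ x, hstar x ∂P₂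
        = ∫ x, (q₁ * p₁ x - q₂ * p₂ x) * hstar x ∂μ := by
      rw [e₁, e₂, ← integral_const_mul, ← integral_const_mul,
        ← integral_sub (hintp₁h.const_mul q₁) (hintp₂h.const_mul q₂)]
      refine integral_congr_ae (Filter.Eventually.of_forall fun x => ?_)
      ring
    have emax : ∀ x, max (q₁ * p₁ x) (q₂ * p₂ x)
        = q₁ * p₁ x + (q₁ * p₁ x - q₂ * p₂ x) * hstar x := by
      intro x
      rw [hhstar]; dsimp only
      by_cases hc : q₁ * p₁ x < q₂ * p₂ x
      · rw [if_pos hc, max_eq_right hc.le]; ring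
      · rw [if_neg hc, max_eq_left (not_lt.1 hc)]; ring
    have : ∫ x, max (q₁ * p₁ x) (q₂ * p₂ x) ∂μ
        = q₁ + ∫ x, (q₁ * p₁ x - q₂ * p₂ x) * hstar x ∂μ := by
      calc ∫ x, max (q₁ * p₁ x) (q₂ * p₂ x) ∂μ
          = ∫ x, (q₁ * p₁ x + (q₁ * p₁ x - q₂ * p₂ x) * hstar x) ∂μ :=
            integral_congr_ae (Filter.Eventually.of_forall fun x => emax x)
        _ = (∫ x, q₁ * p₁ x ∂μ) + ∫ x, (q₁ * p₁ x - q₂ * p₂ x) * hstar x ∂μ :=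
            integral_add (hint₁.const_mul q₁) hstarInt
        _ = q₁ + ∫ x, (q₁ * p₁ x - q₂ * p₂ x) * hstar x ∂μ := by
            rw [integral_const_mul, hInt₁, mul_one]
    rw [ecomb, this]
    linarith
end

section
/- In the binary classification setting with posterior η(x) = P(Y = 1 | X = x) and BOLT risk R as above, let h : X → [-1, 0] be measurable and let Ĉ(x) = 1 if h(x) ≥ -1/2 and Ĉ(x) = 2 otherwise, and let C_MAP(x) = 1 if η(x) ≥ 1/2 and 2 otherwise. Then for every δ ∈ (0,1), R(h) - R(h⋆) ≥ (δ/2) · P( Ĉ(X) ≠ C_MAP(X) and |1 - 2η(X)| ≥ δ ), where h⋆(x) = 0 if η(x) ≥ 1/2 and h⋆(x) = -1 otherwise. -/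
open MeasureTheory

/-- **Excess risk dominates the probability of decision mismatch with margin.**
In the binary classification setting with posterior `η` and BOLT risk
`R(h) = -q₁ E_{P₁}[h] + q₂ E_{P₂}[h]`, for a measurable `h : X → [-1,0]`, the plug-in
classifier `Ĉ(x) = 1` iff `h(x) ≥ -1/2` (else `2`) and the MAP rule
`C_MAP(x) = 1` iff `η(x) ≥ 1/2` (else `2`) satisfy, for every `δ ∈ (0,1)`,
`R(h) - R(h⋆) ≥ (δ/2) · P(Ĉ(X) ≠ C_MAP(X) and |1 - 2η(X)| ≥ δ)`,
where `h⋆(x) = 0` if `η(x) ≥ 1/2` and `-1` otherwise, and `P = q₁ • P₁ + q₂ • P₂` is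
the marginal law of `X`. -/
theorem bolt_excess_risk_mismatch_lower_bound
    {X : Type*} [MeasurableSpace X]
    (P₁ P₂ : Measure X) [IsProbabilityMeasure P₁] [IsProbabilityMeasure P₂]
    (q₁ q₂ : ℝ) (hq₁ : q₁ ∈ Set.Ioo (0:ℝ) 1) (hq₂ : q₂ ∈ Set.Ioo (0:ℝ) 1)
    (hq : q₁ + q₂ = 1)
    (P : Measure X)
    (hP : P = ENNReal.ofReal q₁ • P₁ + ENNReal.ofReal q₂ • P₂)
    (η : X → ℝ) (hηm : Measurable η) (hη01 : ∀ x, η x ∈ Set.Icc (0:ℝ) 1)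
    (hpost : ∀ A : Set X, MeasurableSet A →
        ENNReal.ofReal q₁ * P₁ A = ∫⁻ x in A, ENNReal.ofReal (η x) ∂P)
    (hstar : X → ℝ)
    (hhstar : hstar = fun x => if (1:ℝ)/2 ≤ η x then (0:ℝ) else -1)
    (h : X → ℝ) (hhm : Measurable h) (hhr : ∀ x, h x ∈ Set.Icc (-1:ℝ) 0)
    (Chat Cmap : X → ℕ)
    (hChat : Chat = fun x => if -(1/2:ℝ) ≤ h x then 1 else 2)
    (hCmap : Cmap = fun x => if (1:ℝ)/2 ≤ η x then 1 else 2)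
    (δ : ℝ) (hδ : δ ∈ Set.Ioo (0:ℝ) 1) :
    (-q₁ * ∫ x, h x ∂P₁ + q₂ * ∫ x, h x ∂P₂) -
        (-q₁ * ∫ x, hstar x ∂P₁ + q₂ * ∫ x, hstar x ∂P₂) ≥
      (δ / 2) * (P {x | Chat x ≠ Cmap x ∧ δ ≤ |1 - 2 * η x|}).toReal := by
  have hη0 : ∀ x, 0 ≤ η x := fun x => (hη01 x).1
  have hη1 : ∀ x, η x ≤ 1 := fun x => (hη01 x).2
  -- P is a finite measure
  haveI hPfin : IsFiniteMeasure P := by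
    constructor
    rw [hP]
    simp only [Measure.coe_add, Pi.add_apply, Measure.smul_apply, smul_eq_mul,
      measure_univ, mul_one]
    exact ENNReal.add_lt_top.mpr ⟨ENNReal.ofReal_lt_top, ENNReal.ofReal_lt_top⟩
  -- q₁ • P₁ = P.withDensity η
  have hwd : (ENNReal.ofReal q₁) • P₁ = P.withDensity (fun x => ENNReal.ofReal (η x)) := by
    ext A hA
    rw [Measure.smul_apply, smul_eq_mul, hpost A hA, withDensity_apply _ hA]
  -- integrability of bounded measurable functions
  have intP : ∀ (f : X → ℝ), Measurable f → (∀ x, |f x| ≤ 3) → Integrable f P := by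
    intro f hf hb
    exact (integrable_const (3:ℝ)).mono' hf.aestronglyMeasurable (ae_of_all _ hb)
  have intP1 : ∀ (f : X → ℝ), Measurable f → (∀ x, |f x| ≤ 3) → Integrable f P₁ := by
    intro f hf hb
    exact (integrable_const (3:ℝ)).mono' hf.aestronglyMeasurable (ae_of_all _ hb)
  have intP2 : ∀ (f : X → ℝ), Measurable f → (∀ x, |f x| ≤ 3) → Integrable f P₂ := by
    intro f hf hb
    exact (integrable_const (3:ℝ)).mono' hf.aestronglyMeasurable (ae_of_all _ hb)
  -- q₁ ∫ f dP₁ = ∫ η f dP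
  have hq1int : ∀ (f : X → ℝ), Measurable f →
      q₁ * ∫ x, f x ∂P₁ = ∫ x, η x * f x ∂P := by
    intro f hf
    have h1 : ∫ x, f x ∂((ENNReal.ofReal q₁) • P₁) = q₁ * ∫ x, f x ∂P₁ := by
      rw [integral_smul_measure, ENNReal.toReal_ofReal hq₁.1.le, smul_eq_mul]
    rw [← h1, hwd]
    have hnn : Measurable fun x => Real.toNNReal (η x) := hηm.real_toNNReal
    have heq : (fun x => ENNReal.ofReal (η x)) =
        fun x => ((Real.toNNReal (η x) : NNReal) : ENNReal) := rfl
    rw [heq, integral_withDensity_eq_integral_smul hnn]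
    congr 1
    ext x
    rw [NNReal.smul_def, smul_eq_mul, Real.coe_toNNReal _ (hη0 x)]
  -- ∫ f dP = q₁ ∫ f dP₁ + q₂ ∫ f dP₂
  have hsplit : ∀ (f : X → ℝ), Measurable f → (∀ x, |f x| ≤ 3) →
      ∫ x, f x ∂P = q₁ * ∫ x, f x ∂P₁ + q₂ * ∫ x, f x ∂P₂ := by
    intro f hf hb
    rw [hP, integral_add_measure
      ((intP1 f hf hb).smul_measure ENNReal.ofReal_ne_top)
      ((intP2 f hf hb).smul_measure ENNReal.ofReal_ne_top),
      integral_smul_measure, integral_smul_measure,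
      ENNReal.toReal_ofReal hq₁.1.le, ENNReal.toReal_ofReal hq₂.1.le,
      smul_eq_mul, smul_eq_mul]
  -- the BOLT risk identity
  have keyR : ∀ (f : X → ℝ), Measurable f → (∀ x, |f x| ≤ 3) →
      -q₁ * ∫ x, f x ∂P₁ + q₂ * ∫ x, f x ∂P₂ = ∫ x, (1 - 2 * η x) * f x ∂P := by
    intro f hf hb
    have e1 := hq1int f hf
    have e2 := hsplit f hf hb
    have hintf : Integrable f P := intP f hf hb
    have hintηf : Integrable (fun x => η x * f x) P := by
      apply intP _ (hηm.mul hf)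
      intro x
      calc |η x * f x| = |η x| * |f x| := abs_mul _ _
        _ ≤ 1 * 3 := by
            apply mul_le_mul _ (hb x) (abs_nonneg _) zero_le_one
            rw [abs_of_nonneg (hη0 x)]; exact hη1 x
        _ ≤ 3 := by norm_num
    have e3 : ∫ x, (1 - 2 * η x) * f x ∂P
        = ∫ x, f x ∂P - 2 * ∫ x, η x * f x ∂P := by
      have : (fun x => (1 - 2 * η x) * f x) = fun x => f x - 2 * (η x * f x) := by
        ext x; ring
      rw [this, integral_sub hintf (hintηf.const_mul 2), integral_const_mul]
    have hq2 : q₂ = 1 - q₁ := by linarith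
    rw [e3, ← e1]
    nlinarith [e2]
  -- bounds for h and hstar
  have hhb : ∀ x, |h x| ≤ 3 := by
    intro x
    rcases hhr x with ⟨h1, h2⟩
    rw [abs_le]; constructor <;> linarith
  have hsm : Measurable hstar := by
    rw [hhstar]
    exact Measurable.ite (measurableSet_le measurable_const hηm)
      measurable_const measurable_const
  have hsb : ∀ x, |hstar x| ≤ 3 := by
    intro x
    rw [hhstar]
    dsimp only
    split_ifs <;> norm_num
  have eh := keyR h hhm hhb
  have es := keyR hstar hsm hsb
  -- the difference as a single integral
  have hint1 : Integrable (fun x => (1 - 2 * η x) * h x) P := by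
    apply intP _ ((measurable_const.sub (hηm.const_mul 2)).mul hhm)
    intro x
    calc |(1 - 2 * η x) * h x| = |1 - 2 * η x| * |h x| := abs_mul _ _
      _ ≤ 1 * 3 := by
          apply mul_le_mul _ (hhb x) (abs_nonneg _) zero_le_one
          rw [abs_le]; constructor <;> [nlinarith [hη1 x]; nlinarith [hη0 x]]
      _ ≤ 3 := by norm_num
  have hint2 : Integrable (fun x => (1 - 2 * η x) * hstar x) P := by
    apply intP _ ((measurable_const.sub (hηm.const_mul 2)).mul hsm)
    intro x
    calc |(1 - 2 * η x) * hstar x| = |1 - 2 * η x| * |hstar x| := abs_mul _ _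
      _ ≤ 1 * 3 := by
          apply mul_le_mul _ (hsb x) (abs_nonneg _) zero_le_one
          rw [abs_le]; constructor <;> [nlinarith [hη1 x]; nlinarith [hη0 x]]
      _ ≤ 3 := by norm_num
  set g : X → ℝ := fun x => (1 - 2 * η x) * (h x - hstar x) with hg
  have hgm : Measurable g := (measurable_const.sub (hηm.const_mul 2)).mul (hhm.sub hsm)
  have hintg : Integrable g P := by
    have : g = fun x => (1 - 2 * η x) * h x - (1 - 2 * η x) * hstar x := by
      ext x; simp only [hg]; ring
    rw [this]
    exact hint1.sub hint2
  have hdiff : (-q₁ * ∫ x, h x ∂P₁ + q₂ * ∫ x, h x ∂P₂) -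
      (-q₁ * ∫ x, hstar x ∂P₁ + q₂ * ∫ x, hstar x ∂P₂) = ∫ x, g x ∂P := by
    rw [eh, es, ← integral_sub hint1 hint2]
    congr 1
    ext x
    simp only [hg]
    ring
  -- g is nonnegative
  have hgnn : ∀ x, 0 ≤ g x := by
    intro x
    simp only [hg, hhstar]
    by_cases hc : (1:ℝ)/2 ≤ η x
    · simp only [hc, if_pos]
      have : h x - 0 ≤ 0 := by linarith [(hhr x).2]
      nlinarith [(hhr x).2]
    · simp only [hc, if_neg, if_false]
      push_neg at hc
      nlinarith [(hhr x).1]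
  -- the mismatch set
  set S : Set X := {x | Chat x ≠ Cmap x ∧ δ ≤ |1 - 2 * η x|} with hS
  have hSm : MeasurableSet S := by
    rw [hS, hChat, hCmap]
    apply MeasurableSet.inter
    · have m1 : Measurable (fun x => if -(1/2:ℝ) ≤ h x then (1:ℕ) else 2) :=
        Measurable.ite (measurableSet_le measurable_const hhm)
          measurable_const measurable_const
      have m2 : Measurable (fun x => if (1:ℝ)/2 ≤ η x then (1:ℕ) else 2) :=
        Measurable.ite (measurableSet_le measurable_const hηm)
          measurable_const measurable_const
      exact (measurableSet_eq_fun m1 m2).compl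
    · exact measurableSet_le measurable_const
        ((measurable_const.sub (hηm.const_mul 2)).abs)
  -- pointwise lower bound on S
  have hSlb : ∀ x ∈ S, δ/2 ≤ g x := by
    intro x hx
    rw [hS] at hx
    obtain ⟨hne, hmar⟩ := hx
    rw [hChat, hCmap] at hne
    simp only [hg, hhstar]
    by_cases hc : (1:ℝ)/2 ≤ η x
    · simp only [hc, if_pos, if_true] at hne ⊢
      have hh : ¬(-(1/2:ℝ) ≤ h x) := by
        intro hh; simp [hh] at hne; linarith
      push_neg at hh
      have habs : |1 - 2 * η x| = 2 * η x - 1 := by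
        rw [abs_of_nonpos (by linarith)]; ring
      rw [habs] at hmar
      nlinarith [hδ.1]
    · simp only [hc, if_neg, if_false] at hne ⊢
      have hh : -(1/2:ℝ) ≤ h x := by
        by_contra hh; simp [hh] at hne; linarith
      push_neg at hc
      have habs : |1 - 2 * η x| = 1 - 2 * η x := abs_of_nonneg (by linarith)
      rw [habs] at hmar
      nlinarith [hδ.1]
  -- conclusion
  rw [ge_iff_le, hdiff]
  calc (δ / 2) * (P S).toReal = ∫ _ in S, δ/2 ∂P := by
        rw [setIntegral_const, smul_eq_mul, mul_comm]; rfl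
    _ ≤ ∫ x in S, g x ∂P := by
        apply setIntegral_mono_on (integrableOn_const (measure_lt_top P S).ne)
          hintg.integrableOn hSm
        exact hSlb
    _ ≤ ∫ x, g x ∂P :=
        setIntegral_le_integral hintg (ae_of_all _ hgnn)
end

section
/- Let (X_n) be a sequence of measurable functions h_n : X → [-1, 0] with BOLT risks satisfying R(h_n) → inf_h R(h) = R(h⋆), and assume P(η(X) = 1/2) = 0. Let Ĉ_n(x) = 1 if h_n(x) ≥ -1/2 and 2 otherwise. Then the 0–1 risk of Ĉ_n converges to the Bayes risk: P(Ĉ_n(X) ≠ Y) → P(C_MAP(X) ≠ Y), where C_MAP(x) = 1 if η(x) ≥ 1/2 and 2 otherwise. -/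
open MeasureTheory Filter

/-- **Bayes consistency of the BOLT plug-in classifier.**
Binary classification with priors `q₁, q₂`, class-conditional laws `P₁, P₂`, marginal
`P = q₁ • P₁ + q₂ • P₂`, and posterior `η` with `P(η(X) = 1/2) = 0`. If measurable
functions `hₙ : X → [-1,0]` are risk consistent for the BOLT risk
`R(h) = -q₁ E_{P₁}[h] + q₂ E_{P₂}[h]`, i.e. `R(hₙ) → R(h⋆) = inf_h R(h)` where
`h⋆(x) = 0` if `η(x) ≥ 1/2` and `-1` otherwise, then the 0–1 risk of the plug-in
classifiers `Ĉₙ(x) = 1` iff `hₙ(x) ≥ -1/2` converges to the Bayes risk: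
`P(Ĉₙ(X) ≠ Y) → P(C_MAP(X) ≠ Y)`, where the misclassification probability of a
classifier `C` is `q₁ P₁(C ≠ 1) + q₂ P₂(C ≠ 2)`. -/
theorem bolt_plugin_bayes_consistency
    {X : Type*} [MeasurableSpace X]
    (P₁ P₂ : Measure X) [IsProbabilityMeasure P₁] [IsProbabilityMeasure P₂]
    (q₁ q₂ : ℝ) (hq₁ : q₁ ∈ Set.Ioo (0:ℝ) 1) (hq₂ : q₂ ∈ Set.Ioo (0:ℝ) 1)
    (hq : q₁ + q₂ = 1)
    (P : Measure X)
    (hP : P = ENNReal.ofReal q₁ • P₁ + ENNReal.ofReal q₂ • P₂)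
    (η : X → ℝ) (hηm : Measurable η) (hη01 : ∀ x, η x ∈ Set.Icc (0:ℝ) 1)
    (hpost : ∀ A : Set X, MeasurableSet A →
        ENNReal.ofReal q₁ * P₁ A = ∫⁻ x in A, ENNReal.ofReal (η x) ∂P)
    (hη12 : P {x | η x = 1/2} = 0)
    (hstar : X → ℝ)
    (hhstar : hstar = fun x => if (1:ℝ)/2 ≤ η x then (0:ℝ) else -1)
    (R : (X → ℝ) → ℝ)
    (hR : R = fun h => -q₁ * ∫ x, h x ∂P₁ + q₂ * ∫ x, h x ∂P₂)
    (h : ℕ → X → ℝ) (hhm : ∀ n, Measurable (h n))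
    (hhr : ∀ n x, h n x ∈ Set.Icc (-1:ℝ) 0)
    (hinf : ∀ g : X → ℝ, Measurable g → (∀ x, g x ∈ Set.Icc (-1:ℝ) 0) →
        R hstar ≤ R g)
    (hcons : Tendsto (fun n => R (h n)) atTop (nhds (R hstar)))
    (err : (X → ℕ) → ℝ)
    (herr : err = fun C =>
        q₁ * (P₁ {x | C x ≠ 1}).toReal + q₂ * (P₂ {x | C x ≠ 2}).toReal)
    (Chat : ℕ → X → ℕ)
    (hChat : Chat = fun n x => if -(1/2:ℝ) ≤ h n x then 1 else 2)
    (Cmap : X → ℕ)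
    (hCmap : Cmap = fun x => if (1:ℝ)/2 ≤ η x then 1 else 2) :
    Tendsto (fun n => err (Chat n)) atTop (nhds (err Cmap)) := by
    classical
  obtain ⟨hq₁0, hq₁1⟩ := hq₁
  obtain ⟨hq₂0, hq₂1⟩ := hq₂
  haveI : IsFiniteMeasure P := by
    constructor
    rw [hP, Measure.add_apply, Measure.smul_apply, Measure.smul_apply, smul_eq_mul, smul_eq_mul]
    exact ENNReal.add_lt_top.mpr
      ⟨ENNReal.mul_lt_top ENNReal.ofReal_lt_top (measure_lt_top _ _),
       ENNReal.mul_lt_top ENNReal.ofReal_lt_top (measure_lt_top _ _)⟩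
  have hη0 : ∀ x, 0 ≤ η x := fun x => (hη01 x).1
  have hη1 : ∀ x, η x ≤ 1 := fun x => (hη01 x).2
  -- integrability of bounded measurable functions wrt P
  have hint : ∀ (C : ℝ) (f : X → ℝ), Measurable f → (∀ x, |f x| ≤ C) → Integrable f P := by
    intro C f hf hb
    exact (integrable_const C).mono' hf.aestronglyMeasurable
      (Filter.Eventually.of_forall (by simpa using hb))
  -- density representation of q₁ • P₁
  have hd₁ : (ENNReal.ofReal q₁ • P₁) = P.withDensity (fun x => ENNReal.ofReal (η x)) := by
    ext A hA
    rw [Measure.smul_apply, smul_eq_mul, withDensity_apply _ hA, hpost A hA]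
  -- the q₂ analogue of hpost
  have hpost₂ : ∀ A : Set X, MeasurableSet A →
      ENNReal.ofReal q₂ * P₂ A = ∫⁻ x in A, ENNReal.ofReal (1 - η x) ∂P := by
    intro A hA
    have hpt : ∀ x, ENNReal.ofReal (η x) + ENNReal.ofReal (1 - η x) = 1 := by
      intro x
      rw [← ENNReal.ofReal_add (hη0 x) (by linarith [hη1 x])]
      norm_num
    have hsum : (∫⁻ x in A, ENNReal.ofReal (η x) ∂P)
        + ∫⁻ x in A, ENNReal.ofReal (1 - η x) ∂P = P A := by
      rw [← lintegral_add_left (by fun_prop) _]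
      calc ∫⁻ x in A, (ENNReal.ofReal (η x) + ENNReal.ofReal (1 - η x)) ∂P
          = ∫⁻ x in A, 1 ∂P := by
            exact lintegral_congr fun x => hpt x
        _ = P A := setLIntegral_one A
    have hPA : P A = ENNReal.ofReal q₁ * P₁ A + ENNReal.ofReal q₂ * P₂ A := by
      rw [hP]; simp [Measure.add_apply]
    have hfin : (∫⁻ x in A, ENNReal.ofReal (η x) ∂P) ≠ ⊤ := by
      rw [← hpost A hA]
      exact ENNReal.mul_ne_top ENNReal.ofReal_ne_top (measure_ne_top _ _)
    have key : (∫⁻ x in A, ENNReal.ofReal (η x) ∂P) + ENNReal.ofReal q₂ * P₂ A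
        = (∫⁻ x in A, ENNReal.ofReal (η x) ∂P) + ∫⁻ x in A, ENNReal.ofReal (1 - η x) ∂P := by
      rw [hsum, ← hpost A hA, ← hPA]
    exact (ENNReal.add_right_inj hfin).mp key
  have hd₂ : (ENNReal.ofReal q₂ • P₂) = P.withDensity (fun x => ENNReal.ofReal (1 - η x)) := by
    ext A hA
    rw [Measure.smul_apply, smul_eq_mul, withDensity_apply _ hA, hpost₂ A hA]
  -- integral identities
  have hI₁ : ∀ (g : X → ℝ), Measurable g → q₁ * ∫ x, g x ∂P₁ = ∫ x, η x * g x ∂P := by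
    intro g hg
    have h1 : ∫ x, g x ∂(ENNReal.ofReal q₁ • P₁) = q₁ * ∫ x, g x ∂P₁ := by
      rw [integral_smul_measure, ENNReal.toReal_ofReal hq₁0.le, smul_eq_mul]
    have h2 : ∫ x, g x ∂(P.withDensity fun x => ENNReal.ofReal (η x))
        = ∫ x, η x * g x ∂P := by
      have heq : (fun x => ENNReal.ofReal (η x))
          = fun x => ((Real.toNNReal (η x) : NNReal) : ENNReal) := rfl
      rw [heq, integral_withDensity_eq_integral_smul (f := fun x => (η x).toNNReal)
        (measurable_real_toNNReal.comp hηm) g]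
      refine integral_congr_ae (Filter.Eventually.of_forall fun x => ?_)
      simp [NNReal.smul_def, Real.coe_toNNReal _ (hη0 x)]
    rw [← h1, hd₁, h2]
  have hI₂ : ∀ (g : X → ℝ), Measurable g → q₂ * ∫ x, g x ∂P₂ = ∫ x, (1 - η x) * g x ∂P := by
    intro g hg
    have h1 : ∫ x, g x ∂(ENNReal.ofReal q₂ • P₂) = q₂ * ∫ x, g x ∂P₂ := by
      rw [integral_smul_measure, ENNReal.toReal_ofReal hq₂0.le, smul_eq_mul]
    have h2 : ∫ x, g x ∂(P.withDensity fun x => ENNReal.ofReal (1 - η x))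
        = ∫ x, (1 - η x) * g x ∂P := by
      have heq : (fun x => ENNReal.ofReal (1 - η x))
          = fun x => ((Real.toNNReal (1 - η x) : NNReal) : ENNReal) := rfl
      rw [heq, integral_withDensity_eq_integral_smul (f := fun x => (1 - η x).toNNReal)
        (measurable_real_toNNReal.comp (measurable_const.sub hηm)) g]
      refine integral_congr_ae (Filter.Eventually.of_forall fun x => ?_)
      simp [NNReal.smul_def, Real.coe_toNNReal _ (by linarith [hη1 x] : (0:ℝ) ≤ 1 - η x)]
    rw [← h1, hd₂, h2]
  -- risk as a P-integral
  have hRrep : ∀ (g : X → ℝ), Measurable g → (∀ x, |g x| ≤ 1) →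
      R g = ∫ x, (1 - 2 * η x) * g x ∂P := by
    intro g hg hgb
    have i1 : Integrable (fun x => η x * g x) P :=
      hint 1 _ (hηm.mul hg) (fun x => by
        rw [abs_mul]
        calc |η x| * |g x| ≤ 1 * 1 := by
              apply mul_le_mul _ (hgb x) (abs_nonneg _) zero_le_one
              rw [abs_le]; constructor <;> linarith [hη0 x, hη1 x]
          _ = 1 := by ring)
    have i2 : Integrable (fun x => (1 - η x) * g x) P :=
      hint 1 _ ((measurable_const.sub hηm).mul hg) (fun x => by
        rw [abs_mul]
        calc |1 - η x| * |g x| ≤ 1 * 1 := by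
              apply mul_le_mul _ (hgb x) (abs_nonneg _) zero_le_one
              rw [abs_le]; constructor <;> linarith [hη0 x, hη1 x]
          _ = 1 := by ring)
    simp only [hR, neg_mul]
    rw [hI₁ g hg, hI₂ g hg, neg_add_eq_sub, ← integral_sub i2 i1]
    refine integral_congr_ae (Filter.Eventually.of_forall fun x => ?_)
    ring
  -- error as a P-integral, for a classifier determined by a set S = {C = 1}
  have herrS : ∀ (S : Set X), MeasurableSet S →
      q₁ * (P₁ Sᶜ).toReal + q₂ * (P₂ S).toReal
        = ∫ x, (if x ∈ S then 1 - η x else η x) ∂P := by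
    intro S hS
    have e1 : q₁ * (P₁ Sᶜ).toReal = ∫ x in Sᶜ, η x ∂P := by
      rw [integral_eq_lintegral_of_nonneg_ae (Filter.Eventually.of_forall fun x => hη0 x)
        hηm.aestronglyMeasurable, ← hpost Sᶜ hS.compl, ENNReal.toReal_mul,
        ENNReal.toReal_ofReal hq₁0.le]
    have e2 : q₂ * (P₂ S).toReal = ∫ x in S, (1 - η x) ∂P := by
      have e2' : ∫ x in S, (1 - η x) ∂P
          = (∫⁻ x in S, ENNReal.ofReal (1 - η x) ∂P).toReal := by
        refine integral_eq_lintegral_of_nonneg_ae ?_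
          (measurable_const.sub hηm).aestronglyMeasurable
        exact Filter.Eventually.of_forall fun x => by simp; linarith [hη1 x]
      rw [e2', ← hpost₂ S hS, ENNReal.toReal_mul, ENNReal.toReal_ofReal hq₂0.le]
    have hw : Measurable (fun x => if x ∈ S then 1 - η x else η x) :=
      Measurable.ite hS (measurable_const.sub hηm) hηm
    have hwint : Integrable (fun x => if x ∈ S then 1 - η x else η x) P := by
      refine hint 1 _ hw fun x => ?_
      by_cases hx : x ∈ S <;> simp [hx, abs_le] <;> constructor <;> linarith [hη0 x, hη1 x]
    rw [e1, e2, ← integral_add_compl hS hwint, add_comm]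
    congr 1
    · exact setIntegral_congr_fun hS fun x hx => (if_pos hx).symm
    · exact setIntegral_congr_fun hS.compl fun x hx => (if_neg hx).symm
  -- the sets
  set A : ℕ → Set X := fun n => {x | -(1/2:ℝ) ≤ h n x} with hA
  have hAm : ∀ n, MeasurableSet (A n) := fun n => measurableSet_le measurable_const (hhm n)
  set B : Set X := {x | (1:ℝ)/2 ≤ η x} with hB
  have hBm : MeasurableSet B := measurableSet_le measurable_const hηm
  -- err of Chat n
  have hset1 : ∀ n, {x | Chat n x ≠ 1} = (A n)ᶜ := by
    intro n; ext x; by_cases hx : -(1/2:ℝ) ≤ h n x <;> simp [hChat, hA, hx]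
  have hset2 : ∀ n, {x | Chat n x ≠ 2} = A n := by
    intro n; ext x; by_cases hx : -(1/2:ℝ) ≤ h n x <;> simp [hChat, hA, hx]
  have hset3 : {x | Cmap x ≠ 1} = Bᶜ := by
    ext x; by_cases hx : (1:ℝ)/2 ≤ η x <;> simp [hCmap, hB, hx]
  have hset4 : {x | Cmap x ≠ 2} = B := by
    ext x; by_cases hx : (1:ℝ)/2 ≤ η x <;> simp [hCmap, hB, hx]
  have herrChat : ∀ n, err (Chat n) = ∫ x, (if x ∈ A n then 1 - η x else η x) ∂P := by
    intro n
    rw [herr]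
    simp only
    rw [hset1 n, hset2 n]
    exact herrS (A n) (hAm n)
  have herrCmap : err Cmap = ∫ x, (if x ∈ B then 1 - η x else η x) ∂P := by
    rw [herr]
    simp only
    rw [hset3, hset4]
    exact herrS B hBm
  -- measurability / integrability of the classifier integrands
  have hum : ∀ n, Measurable (fun x => if x ∈ A n then 1 - η x else η x) := fun n =>
    Measurable.ite (hAm n) (measurable_const.sub hηm) hηm
  have hub : ∀ n x, |(if x ∈ A n then 1 - η x else η x)| ≤ 1 := by
    intro n x
    by_cases hx : x ∈ A n <;> simp [hx, abs_le] <;> constructor <;> linarith [hη0 x, hη1 x]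
  have hui : ∀ n, Integrable (fun x => if x ∈ A n then 1 - η x else η x) P := fun n =>
    hint 1 _ (hum n) (hub n)
  have hvm : Measurable (fun x => if x ∈ B then 1 - η x else η x) :=
    Measurable.ite hBm (measurable_const.sub hηm) hηm
  have hvb : ∀ x, |(if x ∈ B then 1 - η x else η x)| ≤ 1 := by
    intro x
    by_cases hx : x ∈ B <;> simp [hx, abs_le] <;> constructor <;> linarith [hη0 x, hη1 x]
  have hvi : Integrable (fun x => if x ∈ B then 1 - η x else η x) P := hint 1 _ hvm hvb
  -- hstar facts
  have hstarm : Measurable hstar := by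
    rw [hhstar]; exact Measurable.ite hBm measurable_const measurable_const
  have hstarb : ∀ x, |hstar x| ≤ 1 := by
    intro x
    have hsx : hstar x = if (1:ℝ)/2 ≤ η x then (0:ℝ) else -1 := by rw [hhstar]
    rw [hsx]
    by_cases hx : (1:ℝ)/2 ≤ η x
    · rw [if_pos hx]; norm_num
    · rw [if_neg hx]; norm_num
  -- excess risk integrand
  have hGm : ∀ n, Measurable (fun x => (1 - 2 * η x) * (h n x - hstar x)) := fun n =>
    ((measurable_const.sub (hηm.const_mul 2)).mul ((hhm n).sub hstarm))
  have hGb : ∀ n x, |(1 - 2 * η x) * (h n x - hstar x)| ≤ 2 := by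
    intro n x
    rw [abs_mul]
    have h1 : |1 - 2 * η x| ≤ 1 := by rw [abs_le]; constructor <;> linarith [hη0 x, hη1 x]
    have h2 : |h n x - hstar x| ≤ 2 := by
      have := (hhr n x).1; have := (hhr n x).2; have := hstarb x
      rw [abs_le] at *; constructor <;> [linarith [this.2]; linarith [this.1]]
    calc |1 - 2 * η x| * |h n x - hstar x| ≤ 1 * 2 :=
          mul_le_mul h1 h2 (abs_nonneg _) zero_le_one
      _ = 2 := by ring
  have hGi : ∀ n, Integrable (fun x => (1 - 2 * η x) * (h n x - hstar x)) P := fun n =>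
    hint 2 _ (hGm n) (hGb n)
  -- excess risk identity
  have hRdiff : ∀ n, R (h n) - R hstar = ∫ x, (1 - 2 * η x) * (h n x - hstar x) ∂P := by
    intro n
    rw [hRrep (h n) (hhm n) (fun x => by
        have := (hhr n x).1; have := (hhr n x).2; rw [abs_le]; constructor <;> linarith),
      hRrep hstar hstarm hstarb,
      ← integral_sub
        (hint 1 (fun x => (1 - 2 * η x) * h n x) ((measurable_const.sub (hηm.const_mul 2)).mul (hhm n)) (fun x => by
          rw [abs_mul]
          have h1 : |1 - 2 * η x| ≤ 1 := by rw [abs_le]; constructor <;> linarith [hη0 x, hη1 x]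
          have h2 : |h n x| ≤ 1 := by
            have := (hhr n x).1; have := (hhr n x).2; rw [abs_le]; constructor <;> linarith
          calc |1 - 2 * η x| * |h n x| ≤ 1 * 1 := mul_le_mul h1 h2 (abs_nonneg _) zero_le_one
            _ = 1 := by ring))
        (hint 1 (fun x => (1 - 2 * η x) * hstar x) ((measurable_const.sub (hηm.const_mul 2)).mul hstarm) (fun x => by
          rw [abs_mul]
          have h1 : |1 - 2 * η x| ≤ 1 := by rw [abs_le]; constructor <;> linarith [hη0 x, hη1 x]
          calc |1 - 2 * η x| * |hstar x| ≤ 1 * 1 :=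
                mul_le_mul h1 (hstarb x) (abs_nonneg _) zero_le_one
            _ = 1 := by ring))]
    refine integral_congr_ae (Filter.Eventually.of_forall fun x => ?_)
    ring
  -- pointwise inequality: lower bound
  have hptlow : ∀ n x, (if x ∈ B then 1 - η x else η x)
      ≤ (if x ∈ A n then 1 - η x else η x) := by
    intro n x
    by_cases hx : x ∈ A n <;> by_cases hy : x ∈ B
    · rw [if_pos hx, if_pos hy]
    · have hyy : ¬ (1:ℝ)/2 ≤ η x := hy
      rw [if_pos hx, if_neg hy]
      linarith [not_le.mp hyy]
    · have hyy : (1:ℝ)/2 ≤ η x := hy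
      rw [if_neg hx, if_pos hy]
      linarith
    · rw [if_neg hx, if_neg hy]
  -- pointwise inequality: upper bound
  have hptup : ∀ n x, (if x ∈ A n then 1 - η x else η x)
      ≤ (if x ∈ B then 1 - η x else η x) + 2 * ((1 - 2 * η x) * (h n x - hstar x)) := by
    intro n x
    have ht1 := (hhr n x).1
    have ht2 := (hhr n x).2
    have hsx : hstar x = if (1:ℝ)/2 ≤ η x then (0:ℝ) else -1 := by rw [hhstar]
    by_cases hx : x ∈ A n <;> by_cases hy : x ∈ B
    · have hxx : -(1/2:ℝ) ≤ h n x := hx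
      have hyy : (1:ℝ)/2 ≤ η x := hy
      rw [if_pos hx, if_pos hy, hsx, if_pos hyy]
      nlinarith [mul_nonneg (by linarith : (0:ℝ) ≤ 2 * η x - 1) (by linarith : (0:ℝ) ≤ -h n x)]
    · have hxx : -(1/2:ℝ) ≤ h n x := hx
      have hyy : ¬ (1:ℝ)/2 ≤ η x := hy
      have hyy' : η x < 1/2 := not_le.mp hyy
      rw [if_pos hx, if_neg hy, hsx, if_neg hyy]
      nlinarith [mul_nonneg (by linarith : (0:ℝ) ≤ 1 - 2 * η x)
        (by linarith : (0:ℝ) ≤ h n x + 1/2)]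
    · have hxx : ¬ -(1/2:ℝ) ≤ h n x := hx
      have hxx' : h n x < -(1/2) := not_le.mp hxx
      have hyy : (1:ℝ)/2 ≤ η x := hy
      rw [if_neg hx, if_pos hy, hsx, if_pos hyy]
      nlinarith [mul_nonneg (by linarith : (0:ℝ) ≤ 2 * η x - 1)
        (by linarith : (0:ℝ) ≤ -h n x - 1/2)]
    · have hyy : ¬ (1:ℝ)/2 ≤ η x := hy
      have hyy' : η x < 1/2 := not_le.mp hyy
      rw [if_neg hx, if_neg hy, hsx, if_neg hyy]
      nlinarith [mul_nonneg (by linarith : (0:ℝ) ≤ 1 - 2 * η x)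
        (by linarith : (0:ℝ) ≤ h n x + 1)]
  -- integrated inequalities
  have hlow : ∀ n, err Cmap ≤ err (Chat n) := by
    intro n
    rw [herrChat n, herrCmap]
    exact integral_mono hvi (hui n) (hptlow n)
  have hup : ∀ n, err (Chat n) ≤ err Cmap + 2 * (R (h n) - R hstar) := by
    intro n
    rw [herrChat n, herrCmap, hRdiff n,
      show (2:ℝ) * ∫ x, (1 - 2 * η x) * (h n x - hstar x) ∂P
          = ∫ x, 2 * ((1 - 2 * η x) * (h n x - hstar x)) ∂P
        from (integral_const_mul 2 _).symm,
      ← integral_add hvi ((hGi n).const_mul 2)]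
    exact integral_mono (hui n) (hvi.add ((hGi n).const_mul 2)) (hptup n)
  -- squeeze
  have hupper_tendsto : Tendsto (fun n => err Cmap + 2 * (R (h n) - R hstar)) atTop
      (nhds (err Cmap)) := by
    have : Tendsto (fun n => R (h n) - R hstar) atTop (nhds 0) := by
      simpa using hcons.sub (tendsto_const_nhds (x := R hstar))
    have h2 : Tendsto (fun n => 2 * (R (h n) - R hstar)) atTop (nhds 0) := by
      simpa using this.const_mul 2
    simpa using (tendsto_const_nhds (x := err Cmap)).add h2
  exact tendsto_of_tendsto_of_tendsto_of_le_of_le tendsto_const_nhds hupper_tendsto hlow hup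
end

section
/- Let P and Q be probability measures on a measurable space X and π ∈ (0,1). Define D^{(π)} = sup over measurable h : X → [0,1] of ( π ∫ h dP - (1-π) ∫ h dQ ). Then D^{(π)} + D^{(1-π)} ≥ TV(P, Q), where TV(P,Q) = sup_{A measurable} |P(A) - Q(A)|. Moreover, when π = 1/2, the inequality is an equality: 2 D^{(1/2)} = TV(P, Q). -/
open MeasureTheory

/-- The prior-weighted BOLT-GAN value: the supremum over measurable critics
`h : X → [0,1]` of `π ∫ h dP - (1-π) ∫ h dQ`. -/
noncomputable def boltGanValue {X : Type*} [MeasurableSpace X]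
    (P Q : Measure X) (π : ℝ) : ℝ :=
  ⨆ h : {h : X → ℝ // Measurable h ∧ ∀ x, h x ∈ Set.Icc (0:ℝ) 1},
    (π * ∫ x, h.1 x ∂P - (1 - π) * ∫ x, h.1 x ∂Q)

/-- Total variation distance `TV(P,Q) = sup_A |P(A) - Q(A)|` over measurable sets. -/
noncomputable def tvDist {X : Type*} [MeasurableSpace X]
    (P Q : Measure X) : ℝ :=
  ⨆ A : {A : Set X // MeasurableSet A}, |(P A.1).toReal - (Q A.1).toReal|

section Aux

variable {X : Type*} [MeasurableSpace X]

lemma aux_integrable (μ : Measure X) [IsFiniteMeasure μ]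
    (h : X → ℝ) (hm : Measurable h) (hb : ∀ x, h x ∈ Set.Icc (0:ℝ) 1) :
    Integrable h μ := by
  refine Integrable.mono' (integrable_const 1) hm.aestronglyMeasurable ?_
  filter_upwards with x
  rw [Real.norm_eq_abs, abs_of_nonneg (hb x).1]
  exact (hb x).2

lemma aux_integral_mem (μ : Measure X) [IsProbabilityMeasure μ]
    (h : X → ℝ) (hm : Measurable h) (hb : ∀ x, h x ∈ Set.Icc (0:ℝ) 1) :
    ∫ x, h x ∂μ ∈ Set.Icc (0:ℝ) 1 := by
  constructor
  · exact integral_nonneg fun x => (hb x).1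
  · calc ∫ x, h x ∂μ ≤ ∫ _, (1:ℝ) ∂μ :=
          integral_mono (aux_integrable μ h hm hb) (integrable_const 1) fun x => (hb x).2
      _ = 1 := by simp

lemma aux_bddAbove (P Q : Measure X) [IsProbabilityMeasure P] [IsProbabilityMeasure Q] (π : ℝ) :
    BddAbove (Set.range fun h : {h : X → ℝ // Measurable h ∧ ∀ x, h x ∈ Set.Icc (0:ℝ) 1} =>
      (π * ∫ x, h.1 x ∂P - (1 - π) * ∫ x, h.1 x ∂Q)) := by
  refine ⟨|π| + |1 - π|, ?_⟩
  rintro _ ⟨h, rfl⟩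
  have hP := aux_integral_mem P h.1 h.2.1 h.2.2
  have hQ := aux_integral_mem Q h.1 h.2.1 h.2.2
  have h1 : π * ∫ x, h.1 x ∂P ≤ |π| := by
    calc π * ∫ x, h.1 x ∂P ≤ |π * ∫ x, h.1 x ∂P| := le_abs_self _
      _ = |π| * |∫ x, h.1 x ∂P| := abs_mul _ _
      _ ≤ |π| * 1 := by
          gcongr
          rw [abs_of_nonneg hP.1]; exact hP.2
      _ = |π| := mul_one _
  have h2 : -((1 - π) * ∫ x, h.1 x ∂Q) ≤ |1 - π| := by
    calc -((1 - π) * ∫ x, h.1 x ∂Q) ≤ |(1 - π) * ∫ x, h.1 x ∂Q| := neg_le_abs _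
      _ = |1 - π| * |∫ x, h.1 x ∂Q| := abs_mul _ _
      _ ≤ |1 - π| * 1 := by
          gcongr
          rw [abs_of_nonneg hQ.1]; exact hQ.2
      _ = |1 - π| := mul_one _
  simpa [sub_eq_add_neg] using add_le_add h1 h2

lemma aux_le_boltGan (P Q : Measure X) [IsProbabilityMeasure P] [IsProbabilityMeasure Q] (π : ℝ)
    (h : X → ℝ) (hm : Measurable h) (hb : ∀ x, h x ∈ Set.Icc (0:ℝ) 1) :
    π * ∫ x, h x ∂P - (1 - π) * ∫ x, h x ∂Q ≤ boltGanValue P Q π :=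
  le_ciSup (aux_bddAbove P Q π) (⟨h, hm, hb⟩ :
    {h : X → ℝ // Measurable h ∧ ∀ x, h x ∈ Set.Icc (0:ℝ) 1})

lemma aux_tv_bddAbove (P Q : Measure X) [IsProbabilityMeasure P] [IsProbabilityMeasure Q] :
    BddAbove (Set.range fun A : {A : Set X // MeasurableSet A} =>
      |(P A.1).toReal - (Q A.1).toReal|) := by
  refine ⟨2, ?_⟩
  rintro _ ⟨A, rfl⟩
  have h1 : (P A.1).toReal ≤ 1 := by
    simpa using ENNReal.toReal_mono (by simp) (prob_le_one (μ := P) (s := A.1))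
  have h2 : (Q A.1).toReal ≤ 1 := by
    simpa using ENNReal.toReal_mono (by simp) (prob_le_one (μ := Q) (s := A.1))
  have := abs_sub ((P A.1).toReal) ((Q A.1).toReal)
  calc |(P A.1).toReal - (Q A.1).toReal| ≤ |(P A.1).toReal| + |(Q A.1).toReal| := abs_sub _ _
    _ ≤ 1 + 1 := by
        gcongr
        · rw [abs_of_nonneg ENNReal.toReal_nonneg]; exact h1
        · rw [abs_of_nonneg ENNReal.toReal_nonneg]; exact h2
    _ = 2 := by norm_num

lemma aux_abs_le_tv (P Q : Measure X) [IsProbabilityMeasure P] [IsProbabilityMeasure Q]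
    {A : Set X} (hA : MeasurableSet A) :
    |(P A).toReal - (Q A).toReal| ≤ tvDist P Q :=
  le_ciSup (aux_tv_bddAbove P Q) (⟨A, hA⟩ : {A : Set X // MeasurableSet A})

/-- Hard direction: for any `[0,1]`-valued measurable `h`,
`∫ h dP - ∫ h dQ ≤ TV(P,Q)`. -/
lemma aux_integral_sub_le_tv (P Q : Measure X)
    [IsProbabilityMeasure P] [IsProbabilityMeasure Q]
    (h : X → ℝ) (hm : Measurable h) (hb : ∀ x, h x ∈ Set.Icc (0:ℝ) 1) :
    ∫ x, h x ∂P - ∫ x, h x ∂Q ≤ tvDist P Q := by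
  set s : SignedMeasure X := P.toSignedMeasure - Q.toSignedMeasure with hs
  set j := s.toJordanDecomposition with hj
  have hsj : j.toSignedMeasure = s := s.toSignedMeasure_toJordanDecomposition
  -- measure identity : P + negPart = Q + posPart
  have hmeas : P + j.negPart = Q + j.posPart := by
    ext A hA
    have h1 : s A = (P A).toReal - (Q A).toReal := by
      rw [hs, VectorMeasure.sub_apply, Measure.toSignedMeasure_apply_measurable hA,
        Measure.toSignedMeasure_apply_measurable hA]
      rfl
    have h2 : s A = (j.posPart A).toReal - (j.negPart A).toReal := by
      rw [← hsj, JordanDecomposition.toSignedMeasure, VectorMeasure.sub_apply,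
        Measure.toSignedMeasure_apply_measurable hA,
        Measure.toSignedMeasure_apply_measurable hA]
      rfl
    have h3 : (P A).toReal + (j.negPart A).toReal
        = (Q A).toReal + (j.posPart A).toReal := by linarith [h1.symm.trans h2]
    have h4 : ((P + j.negPart) A).toReal = ((Q + j.posPart) A).toReal := by
      rw [Measure.add_apply, Measure.add_apply, ENNReal.toReal_add (measure_ne_top _ _)
        (measure_ne_top _ _), ENNReal.toReal_add (measure_ne_top _ _) (measure_ne_top _ _), h3]
    exact (ENNReal.toReal_eq_toReal_iff' (by simp [measure_ne_top]) (by simp [measure_ne_top])).mp h4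
  -- integral identity
  have hint : ∫ x, h x ∂P - ∫ x, h x ∂Q
      = ∫ x, h x ∂j.posPart - ∫ x, h x ∂j.negPart := by
    have e1 : ∫ x, h x ∂(P + j.negPart) = ∫ x, h x ∂(Q + j.posPart) := by rw [hmeas]
    rw [integral_add_measure (aux_integrable P h hm hb) (aux_integrable _ h hm hb),
      integral_add_measure (aux_integrable Q h hm hb) (aux_integrable _ h hm hb)] at e1
    linarith
  obtain ⟨S, hSm, hS1, hS2⟩ := j.mutuallySingular
  -- ∫ h dposPart ≤ posPart univ, ∫ h dnegPart ≥ 0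
  have hpos : ∫ x, h x ∂j.posPart ≤ (j.posPart Set.univ).toReal := by
    calc ∫ x, h x ∂j.posPart ≤ ∫ _, (1:ℝ) ∂j.posPart :=
          integral_mono (aux_integrable _ h hm hb) (integrable_const 1) fun x => (hb x).2
      _ = (j.posPart Set.univ).toReal := by simp; rfl
  have hneg : 0 ≤ ∫ x, h x ∂j.negPart := integral_nonneg fun x => (hb x).1
  -- posPart univ = P Sᶜ - Q Sᶜ
  have hkey : (j.posPart Set.univ).toReal = (P Sᶜ).toReal - (Q Sᶜ).toReal := by
    have hc : MeasurableSet Sᶜ := hSm.compl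
    have hPQ : P Sᶜ + j.negPart Sᶜ = Q Sᶜ + j.posPart Sᶜ := by
      have := congrArg (fun μ : Measure X => μ Sᶜ) hmeas
      simpa [Measure.add_apply] using this
    have huniv : j.posPart Set.univ = j.posPart Sᶜ := by
      rw [← measure_add_measure_compl hSm, hS1, zero_add]
    rw [huniv]
    have h4 : (P Sᶜ).toReal + (j.negPart Sᶜ).toReal
        = (Q Sᶜ).toReal + (j.posPart Sᶜ).toReal := by
      rw [← ENNReal.toReal_add (measure_ne_top _ _) (measure_ne_top _ _),
        ← ENNReal.toReal_add (measure_ne_top _ _) (measure_ne_top _ _), hPQ]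
    have h5 : (j.negPart Sᶜ).toReal = 0 := by rw [hS2]; simp
    linarith
  calc ∫ x, h x ∂P - ∫ x, h x ∂Q = ∫ x, h x ∂j.posPart - ∫ x, h x ∂j.negPart := hint
    _ ≤ (j.posPart Set.univ).toReal := by linarith
    _ = (P Sᶜ).toReal - (Q Sᶜ).toReal := hkey
    _ ≤ |(P Sᶜ).toReal - (Q Sᶜ).toReal| := le_abs_self _
    _ ≤ tvDist P Q := aux_abs_le_tv P Q hSm.compl

/-- Easy direction (general `π`). -/
lemma aux_tv_le (P Q : Measure X) [IsProbabilityMeasure P] [IsProbabilityMeasure Q] (π : ℝ) :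
    tvDist P Q ≤ boltGanValue P Q π + boltGanValue P Q (1 - π) := by
  refine ciSup_le fun A => ?_
  obtain ⟨A, hA⟩ := A
  set p := (P A).toReal
  set q := (Q A).toReal
  have hind : ∀ x, A.indicator (1 : X → ℝ) x ∈ Set.Icc (0:ℝ) 1 := by
    intro x
    by_cases hx : x ∈ A <;> simp [Set.indicator_apply, hx]
  have hindm : Measurable (A.indicator (1 : X → ℝ)) :=
    (measurable_const (a := (1:ℝ))).indicator hA
  have hindc : ∀ x, Aᶜ.indicator (1 : X → ℝ) x ∈ Set.Icc (0:ℝ) 1 := by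
    intro x
    by_cases hx : x ∈ Aᶜ <;> simp [Set.indicator_apply, hx]
  have hindcm : Measurable (Aᶜ.indicator (1 : X → ℝ)) :=
    (measurable_const (a := (1:ℝ))).indicator hA.compl
  have hiP : ∫ x, A.indicator (1 : X → ℝ) x ∂P = p := integral_indicator_one hA
  have hiQ : ∫ x, A.indicator (1 : X → ℝ) x ∂Q = q := integral_indicator_one hA
  have hiPc : ∫ x, Aᶜ.indicator (1 : X → ℝ) x ∂P = 1 - p := by
    rw [integral_indicator_one hA.compl, measureReal_def, measure_compl hA (measure_ne_top _ _)]
    simp [p, ENNReal.toReal_sub_of_le (prob_le_one) (by simp)]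
  have hiQc : ∫ x, Aᶜ.indicator (1 : X → ℝ) x ∂Q = 1 - q := by
    rw [integral_indicator_one hA.compl, measureReal_def, measure_compl hA (measure_ne_top _ _)]
    simp [q, ENNReal.toReal_sub_of_le (prob_le_one) (by simp)]
  have b1 := aux_le_boltGan P Q π _ hindm hind
  have b2 := aux_le_boltGan P Q (1 - π) _ hindm hind
  have b3 := aux_le_boltGan P Q π _ hindcm hindc
  have b4 := aux_le_boltGan P Q (1 - π) _ hindcm hindc
  rw [hiP, hiQ] at b1 b2
  rw [hiPc, hiQc] at b3 b4
  rw [abs_sub_le_iff]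
  constructor
  · nlinarith [b1, b2]
  · nlinarith [b3, b4]

end Aux

/-- **BOLT-GAN value versus total variation.**
For probability measures `P, Q` and any prior `π ∈ (0,1)`,
`D^{(π)} + D^{(1-π)} ≥ TV(P,Q)`, with equality for the balanced prior:
`2 D^{(1/2)} = TV(P,Q)`. -/
theorem boltGan_vs_tv
    {X : Type*} [MeasurableSpace X]
    (P Q : Measure X) [IsProbabilityMeasure P] [IsProbabilityMeasure Q]
    (π : ℝ) (hπ : π ∈ Set.Ioo (0:ℝ) 1) :
    tvDist P Q ≤ boltGanValue P Q π + boltGanValue P Q (1 - π) ∧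
      2 * boltGanValue P Q (1/2) = tvDist P Q := by
  haveI : Nonempty {h : X → ℝ // Measurable h ∧ ∀ x, h x ∈ Set.Icc (0:ℝ) 1} :=
    ⟨⟨fun _ => 0, measurable_const, fun x => by simp⟩⟩
  refine ⟨aux_tv_le P Q π, le_antisymm ?_ ?_⟩
  · have hle : boltGanValue P Q (1/2) ≤ tvDist P Q / 2 := by
      refine ciSup_le fun h => ?_
      have := aux_integral_sub_le_tv P Q h.1 h.2.1 h.2.2
      have h0 : (1:ℝ) - 1/2 = 1/2 := by norm_num
      rw [h0]
      linarith
    linarith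
  · have := aux_tv_le P Q (1/2)
    have h0 : (1:ℝ) - 1/2 = 1/2 := by norm_num
    rw [h0] at this
    linarith
end
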